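/- arXiv:1611.04153 — 5 statements merged into one kernel-verified Lean document; each statement's English description precedes it below -/
import Mathlib

section
/- For the semi-implicit scheme with κ = sign(V) (the IIOE scheme in 1D), the amplification factor S(θ) = (1 - (C/2)(e^{iθ} - 1)) / (1 + (C/2)(1 - e^{-iθ})) satisfies |S(θ)| = 1 for every θ ∈ ℝ and every C ≥ 0. -/
/-!
The denominator of the amplification factor is the complex conjugate of its numerator
`z = 1 - (C/2)(e^{iθ} - 1)`, so `|S(θ)| = |z| / |conj z| = 1` as soon as `z ≠ 0`; and
`Re z = 1 + (C/2)(1 - cos θ) ≥ 1` for `C ≥ 0`.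
-/

open Complex ComplexConjugate

lemma norm_div_conj_self {𝕜 : Type*} [RCLike 𝕜] {z : 𝕜} (hz : z ≠ 0) : ‖z / conj z‖ = 1 := by
  rw [norm_div, RCLike.norm_conj, div_self (norm_ne_zero_iff.mpr hz)]

lemma conj_exp_ofReal_mul_I (θ : ℝ) : conj (exp (θ * I)) = exp (-θ * I) := by
  rw [← exp_conj, map_mul, conj_ofReal, conj_I, mul_neg, neg_mul]

lemma re_one_sub_mul_exp_sub_one (c θ : ℝ) :
    (1 - c * (exp (θ * I) - 1)).re = 1 + c * (1 - Real.cos θ) := by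
  simp only [sub_re, one_re, mul_re, ofReal_re, exp_ofReal_mul_I_re, ofReal_im, sub_im,
    exp_ofReal_mul_I_im, one_im, sub_zero, zero_mul]
  ring

lemma one_sub_mul_exp_sub_one_ne_zero {c : ℝ} (hc : 0 ≤ c) (θ : ℝ) :
    1 - c * (exp (θ * I) - 1) ≠ 0 := by
  refine fun h => absurd (congrArg re h) ?_
  rw [re_one_sub_mul_exp_sub_one, zero_re]
  nlinarith [Real.cos_le_one θ]

/-- The amplification factor of the 1D IIOE semi-implicit scheme (κ = sign V)
has modulus exactly 1 for every `θ` and every Courant number `C ≥ 0`. -/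
theorem iioe_1d_amplification_modulus_one (C : ℝ) (hC : 0 ≤ C) (θ : ℝ) :
    ‖(1 - (C : ℂ) / 2 * (Complex.exp ((θ : ℂ) * Complex.I) - 1)) /
      (1 + (C : ℂ) / 2 * (1 - Complex.exp (-(θ : ℂ) * Complex.I)))‖ = 1 := by
  rw [show (C : ℂ) / 2 = ((C / 2 : ℝ) : ℂ) by push_cast; rfl]
  have hden : 1 + ((C / 2 : ℝ) : ℂ) * (1 - exp (-θ * I)) =
      conj (1 - ((C / 2 : ℝ) : ℂ) * (exp (θ * I) - 1)) := by
    simp only [map_sub, map_one, map_mul, conj_ofReal, conj_exp_ofReal_mul_I]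
    ring
  rw [hden]
  exact norm_div_conj_self (one_sub_mul_exp_sub_one_ne_zero (by positivity) θ)
end

section
/- The amplification factor of the 1D semi-implicit κ-scheme with κ = 0 (Fromm-type semi-implicit scheme), namely S(θ) = (1 - (C/4)(e^{iθ} - e^{-iθ})) / (1 + (C/4)(3 - 4e^{-iθ} + e^{-2iθ})), satisfies |S(θ)| ≤ 1 for all θ ∈ ℝ and all C ≥ 0. -/
/-!
With `z = e^{-iθ}` the denominator symbol is `3 - 4z + z² = (1 - z)(3 - z)`, whose real part
`2(1 - cos θ)²` is nonnegative. Writing numerator and denominator in Cartesian form, the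
difference of their squared norms is a sum of manifestly nonnegative terms when `C ≥ 0`.
-/

open Complex

lemma exp_mul_I_sub_exp_neg_mul_I (θ : ℝ) :
    exp (θ * I) - exp (-θ * I) = (2 * Real.sin θ : ℝ) * I := by
  rw [exp_mul_I, exp_mul_I, cos_neg, sin_neg]
  push_cast
  ring

lemma three_sub_four_exp_neg_mul_I_add_exp (θ : ℝ) :
    3 - 4 * exp (-θ * I) + exp (-2 * θ * I) =
      (2 * (1 - Real.cos θ) ^ 2 : ℝ) + (2 * Real.sin θ * (2 - Real.cos θ) : ℝ) * I := by
  have hsq : exp (-2 * θ * I) = exp (-θ * I) ^ 2 := by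
    rw [← exp_nat_mul]
    push_cast
    ring_nf
  rw [hsq, exp_mul_I, cos_neg, sin_neg]
  push_cast
  linear_combination (-1 : ℂ) * sin_sq_add_cos_sq (θ : ℂ) + sin (θ : ℂ) ^ 2 * I_sq

lemma fromm_numerator_sq_le_denominator_sq {C c s : ℝ} (hC : 0 ≤ C) (hc : c ≤ 1) :
    1 ^ 2 + (-(C * s / 2)) ^ 2 ≤ (1 + C * (1 - c) ^ 2 / 2) ^ 2 + (C * s * (2 - c) / 2) ^ 2 := by
  have hgap : (1 + C * (1 - c) ^ 2 / 2) ^ 2 + (C * s * (2 - c) / 2) ^ 2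
      - (1 ^ 2 + (-(C * s / 2)) ^ 2)
      = C * (1 - c) ^ 2 + (C * (1 - c) ^ 2) ^ 2 / 4 + (C * s) ^ 2 * ((1 - c) * (3 - c)) / 4 := by
    ring
  have h1c : 0 ≤ (1 - c) * (3 - c) := mul_nonneg (by linarith) (by linarith)
  rw [← sub_nonneg, hgap]
  positivity

/-- Unconditional von Neumann stability of the 1D semi-implicit κ-scheme with κ = 0. -/
theorem semi_implicit_fromm_unconditionally_stable (C : ℝ) (hC : 0 ≤ C) (θ : ℝ) :
    ‖(1 - (C : ℂ) / 4 * (Complex.exp ((θ : ℂ) * Complex.I)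
          - Complex.exp (-(θ : ℂ) * Complex.I))) /
      (1 + (C : ℂ) / 4 * (3 - 4 * Complex.exp (-(θ : ℂ) * Complex.I)
          + Complex.exp (-2 * (θ : ℂ) * Complex.I)))‖ ≤ 1 := by
  rw [exp_mul_I_sub_exp_neg_mul_I, three_sub_four_exp_neg_mul_I_add_exp, norm_div]
  refine div_le_one_of_le₀ ?_ (norm_nonneg _)
  set c := Real.cos θ
  set s := Real.sin θ
  have hnum : 1 - (C : ℂ) / 4 * ((2 * s : ℝ) * I) = (1 : ℝ) + (-(C * s / 2) : ℝ) * I := by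
    push_cast
    ring
  have hden : 1 + (C : ℂ) / 4 * ((2 * (1 - c) ^ 2 : ℝ) + (2 * s * (2 - c) : ℝ) * I) =
      (1 + C * (1 - c) ^ 2 / 2 : ℝ) + (C * s * (2 - c) / 2 : ℝ) * I := by
    push_cast
    ring
  rw [hnum, hden, norm_add_mul_I, norm_add_mul_I]
  exact Real.sqrt_le_sqrt (fromm_numerator_sq_le_denominator_sq hC (Real.cos_le_one θ))
end

section
/- The amplification factor of the fully implicit κ-scheme with constant velocity V > 0 and κ = -1, S(θ) = (1 + C(1 - e^{-iθ}) + (C/2)(1+C)(1 - 2e^{-iθ} + e^{-2iθ}))^{-1}, satisfies |S(θ)| ≤ 1 for all θ ∈ ℝ and all C ≥ 0. -/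
/-!
Write `w = 1 - e^{-iθ}`. Since `|e^{-iθ}| = 1`, `|w|² = 2 Re w`, and with this relation the
denominator `1 + a w + b w²` satisfies
`|1 + a w + b w²|² = 1 + 2 (a + a² - 2b) Re w + 4 b (1 + a + b) (Re w)²`.
For `a = C`, `b = C (1 + C) / 2` the linear coefficient vanishes, so the denominator has modulus
at least `1`.
-/

open Complex

namespace Complex

lemma normSq_one_sub_of_norm_eq_one {z : ℂ} (hz : ‖z‖ = 1) :
    normSq (1 - z) = 2 * (1 - z).re := by
  have hz' : normSq z = 1 := by rw [normSq_eq_norm_sq, hz, one_pow]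
  rw [normSq_sub, normSq_one, hz']
  simp only [one_mul, sub_re, one_re, conj_re]
  ring

lemma normSq_one_add_mul_add_mul_sq (a b : ℝ) {w : ℂ} (hw : normSq w = 2 * w.re) :
    normSq (1 + a * w + b * w ^ 2)
      = 1 + 2 * (a + a ^ 2 - 2 * b) * w.re + 4 * b * (1 + a + b) * w.re ^ 2 := by
  rw [normSq_apply] at hw ⊢
  simp only [add_re, add_im, one_re, one_im, mul_re, mul_im, ofReal_re, ofReal_im, pow_two]
  linear_combination ((a + 2 * b * w.re) ^ 2 - 2 * b * (1 + a * w.re + b * w.re ^ 2)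
    + b ^ 2 * (2 * w.re - w.re ^ 2 + w.im ^ 2)) * hw

lemma one_le_norm_one_add_mul_add_mul_sq {a b : ℝ} (ha : 0 ≤ a) (hb : 0 ≤ b)
    (hab : 2 * b ≤ a + a ^ 2) {w : ℂ} (hw : normSq w = 2 * w.re) :
    1 ≤ ‖1 + a * w + b * w ^ 2‖ := by
  have hre : 0 ≤ w.re := by nlinarith [normSq_nonneg w]
  have hnormSq : 1 ≤ normSq (1 + a * w + b * w ^ 2) := by
    rw [normSq_one_add_mul_add_mul_sq a b hw]
    have hlin : 0 ≤ 2 * (a + a ^ 2 - 2 * b) * w.re := by nlinarith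
    have hquad : 0 ≤ 4 * b * (1 + a + b) * w.re ^ 2 := by positivity
    linarith
  rw [normSq_eq_norm_sq] at hnormSq
  exact one_le_sq_iff₀ (norm_nonneg _) |>.mp hnormSq

end Complex

/-- Unconditional von Neumann stability of the fully implicit κ-scheme with κ = -1. -/
theorem implicit_beam_warming_unconditionally_stable (C : ℝ) (hC : 0 ≤ C) (θ : ℝ) :
    ‖(1 + (C : ℂ) * (1 - Complex.exp (-(θ : ℂ) * Complex.I))
        + (C : ℂ) / 2 * (1 + (C : ℂ)) *
          (1 - 2 * Complex.exp (-(θ : ℂ) * Complex.I)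
            + Complex.exp (-2 * (θ : ℂ) * Complex.I)))⁻¹‖ ≤ 1 := by
  set z := Complex.exp (-(θ : ℂ) * Complex.I)
  have hz : ‖z‖ = 1 := by simpa [z, neg_mul] using norm_exp_ofReal_mul_I (-θ)
  have hz_sq : Complex.exp (-2 * (θ : ℂ) * Complex.I) = z ^ 2 := by
    rw [← exp_nat_mul]
    ring_nf
  have hden : 1 + (C : ℂ) * (1 - z) + (C : ℂ) / 2 * (1 + (C : ℂ)) * (1 - 2 * z + z ^ 2)
      = 1 + (C : ℂ) * (1 - z) + ((C * (1 + C) / 2 : ℝ) : ℂ) * (1 - z) ^ 2 := by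
    push_cast
    ring
  rw [hz_sq, hden, norm_inv]
  exact inv_le_one_of_one_le₀ <| one_le_norm_one_add_mul_add_mul_sq hC (by positivity)
    (by linarith) (normSq_one_sub_of_norm_eq_one hz)
end

section
/- For all C, D ≥ 0 and all θ, φ ∈ ℝ, the denominator of the IIOE 2D amplification factor satisfies |1 + (C/2)(1 - e^{-iθ}) + (D/2)(1 - e^{-iφ})| ≥ 1, with equality if and only if C(1-cos θ) + D(1-cos φ) = 0. -/
/-!
The real part of `1 - exp (-θ i)` is `1 - cos θ ≥ 0`, so the denominator is `1 + w` with
`Re w = (C (1 - cos θ) + D (1 - cos φ)) / 2 ≥ 0`, whence `‖1 + w‖ ≥ Re (1 + w) ≥ 1`.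
Equality forces `Re w = 0`; conversely, if `Re w = 0` then each term `C (1 - cos θ)` vanishes, so either
`C = 0` or `exp (-θ i) = 1`, and `w = 0`.
-/

open Complex

lemma Complex.one_add_re_le_norm_one_add (w : ℂ) : 1 + w.re ≤ ‖1 + w‖ := by
  simpa using re_le_norm (1 + w)

lemma Complex.norm_one_add_eq_one_iff {w : ℂ} (hw : 0 ≤ w.re) (hw0 : w.re = 0 → w = 0) :
    ‖1 + w‖ = 1 ↔ w.re = 0 := by
  constructor
  · intro h
    linarith [one_add_re_le_norm_one_add w]
  · intro h
    simp [hw0 h]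

lemma Complex.re_one_sub_exp_neg_mul_I (θ : ℝ) : (1 - exp (-θ * I)).re = 1 - Real.cos θ := by
  simp [exp_re]

lemma Complex.re_ofReal_mul_one_sub_exp_neg_mul_I (c θ : ℝ) :
    ((c : ℂ) * (1 - exp (-θ * I))).re = c * (1 - Real.cos θ) := by
  rw [re_ofReal_mul, re_one_sub_exp_neg_mul_I]

lemma Complex.one_sub_exp_neg_mul_I_eq_zero_iff (θ : ℝ) :
    1 - exp (-θ * I) = 0 ↔ Real.cos θ = 1 := by
  constructor
  · intro h
    linarith [congrArg re h, re_one_sub_exp_neg_mul_I θ, zero_re]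
  · intro h
    have hsin : Real.sin θ = 0 := by nlinarith [Real.sin_sq_add_cos_sq θ]
    rw [← ofReal_neg, exp_mul_I, ← ofReal_cos, ← ofReal_sin, Real.cos_neg, Real.sin_neg, h, hsin]
    simp

lemma Complex.ofReal_mul_one_sub_exp_neg_mul_I_eq_zero {c θ : ℝ} (h : c * (1 - Real.cos θ) = 0) :
    (c : ℂ) * (1 - exp (-θ * I)) = 0 := by
  rcases mul_eq_zero.mp h with hc | hcos
  · simp [hc]
  · rw [(one_sub_exp_neg_mul_I_eq_zero_iff θ).mpr (by linarith), mul_zero]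

/-- Key 2D stability estimate: for `C, D ≥ 0` the modulus of the implicit-part
factor is at least 1, with equality iff `C(1 - cos θ) + D(1 - cos φ) = 0`. -/
theorem implicit_denominator_ge_one (C D : ℝ) (hC : 0 ≤ C) (hD : 0 ≤ D) (θ φ : ℝ) :
    1 ≤ ‖(1 + (C : ℂ) / 2 * (1 - Complex.exp (-(θ : ℂ) * Complex.I))
        + (D : ℂ) / 2 * (1 - Complex.exp (-(φ : ℂ) * Complex.I)))‖ ∧
    (‖(1 + (C : ℂ) / 2 * (1 - Complex.exp (-(θ : ℂ) * Complex.I))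
        + (D : ℂ) / 2 * (1 - Complex.exp (-(φ : ℂ) * Complex.I)))‖ = 1
      ↔ C * (1 - Real.cos θ) + D * (1 - Real.cos φ) = 0) := by
  set w : ℂ := (C : ℂ) / 2 * (1 - exp (-θ * I)) + (D : ℂ) / 2 * (1 - exp (-φ * I)) with hw
  have hCθ : 0 ≤ C * (1 - Real.cos θ) := mul_nonneg hC (by linarith [Real.cos_le_one θ])
  have hDφ : 0 ≤ D * (1 - Real.cos φ) := mul_nonneg hD (by linarith [Real.cos_le_one φ])
  have hw_half : w = ((C : ℂ) * (1 - exp (-θ * I)) + (D : ℂ) * (1 - exp (-φ * I))) / 2 := by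
    rw [hw]; ring
  have hre : w.re = (C * (1 - Real.cos θ) + D * (1 - Real.cos φ)) / 2 := by
    rw [hw_half, div_ofNat_re, add_re, re_ofReal_mul_one_sub_exp_neg_mul_I,
      re_ofReal_mul_one_sub_exp_neg_mul_I]
  have hw0 : w.re = 0 → w = 0 := by
    intro h
    have hθ := ofReal_mul_one_sub_exp_neg_mul_I_eq_zero (c := C) (θ := θ) (by linarith)
    have hφ := ofReal_mul_one_sub_exp_neg_mul_I_eq_zero (c := D) (θ := φ) (by linarith)
    rw [hw_half, hθ, hφ, add_zero, zero_div]
  rw [add_assoc, norm_one_add_eq_one_iff (by linarith) hw0, hre]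
  exact ⟨by linarith [one_add_re_le_norm_one_add w], by constructor <;> intro h <;> linarith⟩
end

section
/- Let p(x) = ax² + bx + c be any quadratic polynomial and consider the exact advection solution u(x,t) = p(x - Vt) with constant V. Then u satisfies the 1D semi-implicit κ-scheme exactly for every κ, h > 0 and τ > 0: substituting U_i^n = p(x_i - Vt^n) into the scheme U_i^{n+1} + C(U_i^{n+1} - U_{i-1}^{n+1}) - (C/2)D^κ U_{i-1}^{n+1} · h·(1/h) = U_i^n - (C/2)·h·D^κ U_i^n (with C = τV/h > 0, hD^κU_j = ((1-κ)(U_j - U_{j-1}) + (1+κ)(U_{j+1} - U_j))/2) gives an identity. -/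
/-!
For a quadratic `p` the κ-difference `h D^κ p (x) = h p'(x) + κ a h²` differs from the central
difference by the same constant at every point, so the κ-corrections of the two time levels cancel
and, with `s = C h = V τ`, the scheme reduces to `p x - p (x - s) = s/2 (p' x + p' (x - s))`:
the trapezoidal rule, which is exact on quadratics.
-/

namespace KappaScheme

noncomputable section

def quadratic (a b c y : ℝ) : ℝ := a * y ^ 2 + b * y + c

/-- The paper's `h D^κ U_j`, for grid values `U_j = u x` with grid step `h`. -/
def kappaDiff (κ h : ℝ) (u : ℝ → ℝ) (x : ℝ) : ℝ :=
  ((1 - κ) * (u x - u (x - h)) + (1 + κ) * (u (x + h) - u x)) / 2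

theorem kappaDiff_quadratic (a b c κ h x : ℝ) :
    kappaDiff κ h (quadratic a b c) x = h * (2 * a * x + b) + κ * a * h ^ 2 := by
  simp only [kappaDiff, quadratic]
  ring

theorem quadratic_sub_eq_trapezoid (a b c x s : ℝ) :
    quadratic a b c x - quadratic a b c (x - s)
      = s / 2 * ((2 * a * x + b) + (2 * a * (x - s) + b)) := by
  simp only [quadratic]
  ring

theorem scheme_exact_quadratic (a b c κ h C x : ℝ) :
    quadratic a b c (x - C * h)
        + C * (quadratic a b c (x - C * h) - quadratic a b c (x - C * h - h))
        - C / 2 * kappaDiff κ h (quadratic a b c) (x - C * h - h)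
      = quadratic a b c x - C / 2 * kappaDiff κ h (quadratic a b c) x := by
  rw [kappaDiff_quadratic, kappaDiff_quadratic]
  have htrap := quadratic_sub_eq_trapezoid a b c x (C * h)
  simp only [quadratic] at htrap ⊢
  linear_combination -htrap

end

end KappaScheme

open KappaScheme in
theorem semi_implicit_exact_on_quadratics_general (a b c V h τ κ : ℝ)
    (hh : 0 < h) (C : ℝ) (hCdef : C = τ * V / h)
    (U : ℤ → ℕ → ℝ)
    (hU : ∀ (i : ℤ) (n : ℕ),
      U i n = a * ((i : ℝ) * h - V * (n : ℝ) * τ) ^ 2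
        + b * ((i : ℝ) * h - V * (n : ℝ) * τ) + c)
    (i : ℤ) (n : ℕ) :
    U i (n + 1) + C * (U i (n + 1) - U (i - 1) (n + 1))
      - (C / 2) * ((1 - κ) * (U (i - 1) (n + 1) - U (i - 2) (n + 1))
          + (1 + κ) * (U i (n + 1) - U (i - 1) (n + 1))) / 2
      = U i n - (C / 2) * ((1 - κ) * (U i n - U (i - 1) n)
          + (1 + κ) * (U (i + 1) n - U i n)) / 2 := by
  have hshift : V * τ = C * h := by
    rw [hCdef]
    field_simp
  have hgrid : ∀ (j : ℤ) (m : ℕ), U j m = quadratic a b c (j * h - m * (C * h)) := by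
    intro j m
    rw [hU, quadratic, ← hshift]
    ring
  have hexact := scheme_exact_quadratic a b c κ h C (i * h - n * (C * h))
  simp only [kappaDiff, quadratic] at hexact
  simp only [hgrid, quadratic]
  push_cast
  linear_combination hexact

/-- The 1D semi-implicit κ-scheme reproduces advected quadratic data exactly:
with `U i n = p(ih - Vnτ)` for a quadratic `p`, the scheme identity holds for
all `i, n, κ`. -/
theorem semi_implicit_exact_on_quadratics (a b c V h τ κ : ℝ)
    (hh : 0 < h) (hτ : 0 < τ) (hV : 0 < V) (C : ℝ) (hCdef : C = τ * V / h)
    (U : ℤ → ℕ → ℝ)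
    (hU : ∀ (i : ℤ) (n : ℕ),
      U i n = a * ((i : ℝ) * h - V * (n : ℝ) * τ) ^ 2
        + b * ((i : ℝ) * h - V * (n : ℝ) * τ) + c)
    (i : ℤ) (n : ℕ) :
    U i (n + 1) + C * (U i (n + 1) - U (i - 1) (n + 1))
      - (C / 2) * ((1 - κ) * (U (i - 1) (n + 1) - U (i - 2) (n + 1))
          + (1 + κ) * (U i (n + 1) - U (i - 1) (n + 1))) / 2
      = U i n - (C / 2) * ((1 - κ) * (U i n - U (i - 1) n)
          + (1 + κ) * (U (i + 1) n - U i n)) / 2 :=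
  semi_implicit_exact_on_quadratics_general a b c V h τ κ hh C hCdef U hU i n
end
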